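/- arXiv:1512.05131 — 2 statements merged into one kernel-verified Lean document; each statement's English description precedes it below -/
import Mathlib

section
/- Fix s, t, r ∈ [0,1] and set m = (1−r)s + rt. Let f₀, f₁, g₀, g₁ be Borel functions from ℝⁿ to ℝ ∪ {+∞} such that (1−r) g₀((1−s)x₀ + s x₁) + r g₁((1−t)x₀ + t x₁) ≤ (1−m) f₀(x₀) + m f₁(x₁) for all x₀, x₁ ∈ ℝⁿ. Then (∫ e^{−g₀})^{1−r} (∫ e^{−g₁})^{r} ≥ (∫ e^{−f₀})^{1−m} (∫ e^{−f₁})^{m}. -/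
open MeasureTheory ENNReal

noncomputable def expNeg (y : EReal) : ℝ≥0∞ :=
  if y = ⊤ then 0 else ENNReal.ofReal (Real.exp (-y.toReal))

/-!
With `F = e^{-f}` the hypothesis on `f₀, f₁, g₀, g₁` becomes the multiplicative one
`F₀(x₀)^{1-m} F₁(x₁)^m ≤ G₀((1-s)x₀ + s x₁)^{1-r} G₁((1-t)x₀ + t x₁)^r`. This form of the
inequality tensorizes by Fubini (apply it to the fibres, then to the marginals), so it suffices
to prove it on `ℝ`, and by monotone convergence for bounded, compactly supported `F₀, F₁`.
There, let `X₀, X₁` be the monotone maps pushing the uniform measure on `(0, 1)` forward to the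
normalized densities, so that `Fᵢ(Xᵢ w) Xᵢ'(w) = ∫ Fᵢ` for a.e. `w`. The hypothesis at
`(X₀ w, X₁ w)` and the weighted AM-GM inequality for the derivatives give
`(∫F₀)^{1-m} (∫F₁)^m ≤ (G₀(u w) u'(w))^{1-r} (G₁(v w) v'(w))^r` for the monotone maps
`u = (1-s)X₀ + sX₁`, `v = (1-t)X₀ + tX₁`. Integrate over `(0, 1)`, apply Hölder's inequality,
and conclude with the change of variables `∫ G(u w) u'(w) dw ≤ ∫ G`.
-/

open Set Filter Topology

lemma expNeg_eq_exp_neg {y : EReal} (hy : y ≠ ⊥) : expNeg y = EReal.exp (-y) := by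
  induction y with
  | bot => exact absurd rfl hy
  | coe y => simp [expNeg, ← EReal.coe_neg]
  | top => simp [expNeg]

lemma EReal.coe_mul_ne_bot {c : ℝ} (hc : 0 ≤ c) {a : EReal} (ha : a ≠ ⊥) : (c : EReal) * a ≠ ⊥ :=
  (EReal.mul_ne_bot _ _).2 ⟨Or.inl (EReal.coe_ne_bot c), Or.inr ha, Or.inl (EReal.coe_ne_top c),
    Or.inl (EReal.coe_nonneg.2 hc)⟩

lemma EReal.exp_neg_rpow (a : EReal) (c : ℝ) : EReal.exp (-a) ^ c = EReal.exp (-(c * a)) := by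
  rw [← EReal.exp_mul, EReal.neg_mul, mul_comm]

lemma EReal.exp_neg_rpow_mul_exp_neg_rpow_le {a₀ a₁ b₀ b₁ : EReal} (ha₀ : a₀ ≠ ⊥) (ha₁ : a₁ ≠ ⊥)
    (hb₀ : b₀ ≠ ⊥) (hb₁ : b₁ ≠ ⊥) {c₀ c₁ e₀ e₁ : ℝ} (hc₀ : 0 ≤ c₀) (hc₁ : 0 ≤ c₁)
    (he₀ : 0 ≤ e₀) (he₁ : 0 ≤ e₁)
    (h : (c₀ : EReal) * b₀ + c₁ * b₁ ≤ e₀ * a₀ + e₁ * a₁) :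
    EReal.exp (-a₀) ^ e₀ * EReal.exp (-a₁) ^ e₁ ≤ EReal.exp (-b₀) ^ c₀ * EReal.exp (-b₁) ^ c₁ := by
  have hneg := EReal.neg_le_neg_iff.2 h
  rw [EReal.neg_add (Or.inl (coe_mul_ne_bot he₀ ha₀)) (Or.inr (coe_mul_ne_bot he₁ ha₁)),
    EReal.neg_add (Or.inl (coe_mul_ne_bot hc₀ hb₀)) (Or.inr (coe_mul_ne_bot hc₁ hb₁)),
    sub_eq_add_neg, sub_eq_add_neg] at hneg
  simpa only [EReal.exp_neg_rpow, ← EReal.exp_add] using EReal.exp_monotone hneg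

lemma Real.rpow_mul_rpow_le_weighted_means {d₀ d₁ r s t m : ℝ} (h₀ : 0 ≤ d₀) (h₁ : 0 ≤ d₁)
    (hr0 : 0 ≤ r) (hr1 : r ≤ 1) (hs0 : 0 ≤ s) (hs1 : s ≤ 1) (ht0 : 0 ≤ t) (ht1 : t ≤ 1)
    (hm : m = (1 - r) * s + r * t) :
    d₀ ^ (1 - m) * d₁ ^ m ≤ ((1 - s) * d₀ + s * d₁) ^ (1 - r) * ((1 - t) * d₀ + t * d₁) ^ r := by
  have hsplit : d₀ ^ (1 - m) * d₁ ^ m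
      = (d₀ ^ (1 - s) * d₁ ^ s) ^ (1 - r) * (d₀ ^ (1 - t) * d₁ ^ t) ^ r := by
    rw [Real.mul_rpow (by positivity) (by positivity),
      Real.mul_rpow (by positivity) (by positivity),
      ← Real.rpow_mul h₀, ← Real.rpow_mul h₁, ← Real.rpow_mul h₀, ← Real.rpow_mul h₁,
      mul_mul_mul_comm, ← Real.rpow_add_of_nonneg h₀ (by nlinarith) (by nlinarith),
      ← Real.rpow_add_of_nonneg h₁ (by nlinarith) (by nlinarith)]
    congr 2 <;> rw [hm] <;> ring
  rw [hsplit]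
  gcongr
  · exact Real.geom_mean_le_arith_mean2_weighted (by linarith) hs0 h₀ h₁ (by ring)
  · exact Real.geom_mean_le_arith_mean2_weighted (by linarith) ht0 h₀ h₁ (by ring)

theorem rpow_mul_rpow_le_of_weighted_means {a₀ a₁ b₀ b₁ : ℝ≥0∞} {d₀ d₁ r s t m : ℝ}
    (hd₀ : 0 ≤ d₀) (hd₁ : 0 ≤ d₁)
    (hr0 : 0 ≤ r) (hr1 : r ≤ 1) (hs0 : 0 ≤ s) (hs1 : s ≤ 1) (ht0 : 0 ≤ t) (ht1 : t ≤ 1)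
    (hm : m = (1 - r) * s + r * t) (h : a₀ ^ (1 - m) * a₁ ^ m ≤ b₀ ^ (1 - r) * b₁ ^ r) :
    (a₀ * ENNReal.ofReal d₀) ^ (1 - m) * (a₁ * ENNReal.ofReal d₁) ^ m ≤
      (ENNReal.ofReal ((1 - s) * d₀ + s * d₁) * b₀) ^ (1 - r) *
        (ENNReal.ofReal ((1 - t) * d₀ + t * d₁) * b₁) ^ r := by
  have hm0 : 0 ≤ m := hm ▸ by nlinarith
  have hm1 : m ≤ 1 := hm ▸ by nlinarith
  have hmeans := Real.rpow_mul_rpow_le_weighted_means hd₀ hd₁ hr0 hr1 hs0 hs1 ht0 ht1 hm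
  calc (a₀ * ENNReal.ofReal d₀) ^ (1 - m) * (a₁ * ENNReal.ofReal d₁) ^ m
      = (a₀ ^ (1 - m) * a₁ ^ m) * ENNReal.ofReal (d₀ ^ (1 - m) * d₁ ^ m) := by
        rw [mul_rpow_of_nonneg _ _ (by linarith), mul_rpow_of_nonneg _ _ hm0,
          ofReal_mul (by positivity), ofReal_rpow_of_nonneg hd₀ (by linarith),
          ofReal_rpow_of_nonneg hd₁ hm0]
        ring
    _ ≤ (b₀ ^ (1 - r) * b₁ ^ r) *
          ENNReal.ofReal (((1 - s) * d₀ + s * d₁) ^ (1 - r) * ((1 - t) * d₀ + t * d₁) ^ r) :=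
        mul_le_mul' h (ofReal_le_ofReal hmeans)
    _ = _ := by
        rw [mul_rpow_of_nonneg _ _ (by linarith), mul_rpow_of_nonneg _ _ hr0,
          ofReal_mul (by positivity), ofReal_rpow_of_nonneg (by positivity) (by linarith),
          ofReal_rpow_of_nonneg (by positivity) hr0]
        ring

theorem lintegral_le_of_le_rpow_mul_rpow {α : Type*} [MeasurableSpace α] {μ : Measure α}
    {F G₀ G₁ : α → ℝ≥0∞} (hG₀ : AEMeasurable G₀ μ) (hG₁ : AEMeasurable G₁ μ) {r : ℝ}
    (hr0 : 0 ≤ r) (hr1 : r ≤ 1) (h : ∀ x, F x ≤ G₀ x ^ (1 - r) * G₁ x ^ r) :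
    ∫⁻ x, F x ∂μ ≤ (∫⁻ x, G₀ x ∂μ) ^ (1 - r) * (∫⁻ x, G₁ x ∂μ) ^ r :=
  (lintegral_mono h).trans
    (ENNReal.lintegral_mul_norm_pow_le hG₀ hG₁ (by linarith) hr0 (by ring))

theorem Monotone.lintegral_ofReal_deriv_mul_comp_le {X : ℝ → ℝ} (hX : Monotone X)
    (G : ℝ → ℝ≥0∞) : ∫⁻ w, ENNReal.ofReal (deriv X w) * G (X w) ≤ ∫⁻ y, G y := by
  set D := {w | DifferentiableAt ℝ X w}
  calc ∫⁻ w, ENNReal.ofReal (deriv X w) * G (X w)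
      = ∫⁻ w in D, ENNReal.ofReal (deriv X w) * G (X w) := by
        rw [Measure.restrict_eq_self_of_ae_mem (s := D) hX.ae_differentiableAt]
    _ = ∫⁻ y in X '' D, G y :=
        (lintegral_image_eq_lintegral_deriv_mul_of_monotoneOn
          (measurableSet_of_differentiableAt ℝ X) (fun w hw => hw.hasDerivAt.hasDerivWithinAt)
          (hX.monotoneOn D) G).symm
    _ ≤ ∫⁻ y, G y := setLIntegral_le_lintegral _ _

theorem ENNReal.iSup_rpow_mul_iSup_rpow_le {A B : ℕ → ℝ≥0∞} (hA : Monotone A) (hB : Monotone B)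
    {p q : ℝ} (hp : 0 < p) (hq : 0 < q) {c : ℝ≥0∞} (h : ∀ K, A K ^ p * B K ^ q ≤ c) :
    (⨆ K, A K) ^ p * (⨆ K, B K) ^ q ≤ c := by
  rw [← orderIsoRpow_apply p hp, (orderIsoRpow p hp).map_iSup, ← orderIsoRpow_apply q hq,
    (orderIsoRpow q hq).map_iSup, ENNReal.iSup_mul, iSup_le_iff]
  intro K
  rw [ENNReal.mul_iSup]
  refine iSup_le fun L => (mul_le_mul' ?_ ?_).trans (h (max K L))
  · exact rpow_le_rpow (hA (le_max_left K L)) hp.le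
  · exact rpow_le_rpow (hB (le_max_right K L)) hq.le

theorem LipschitzWith.volume_image_eq_zero {K : NNReal} {f : ℝ → ℝ} (hf : LipschitzWith K f)
    {s : Set ℝ} (hs : volume s = 0) : volume (f '' s) = 0 := by
  have h := (hf.lipschitzOnWith (s := s)).hausdorffMeasure_image_le zero_le_one
  simpa [hs] using h

theorem LipschitzWith.ae_notMem_of_comp_eq_mul_const {K : NNReal} {Φ X : ℝ → ℝ}
    (hΦ : LipschitzWith K Φ) {J : ℝ} (hJ : J ≠ 0) {S : Set ℝ} (hΦX : ∀ w ∈ S, Φ (X w) = w * J)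
    {E : Set ℝ} (hE : volume E = 0) : ∀ᵐ w, w ∈ S → X w ∉ E := by
  have hnull : volume ((· * J) ⁻¹' (Φ '' E)) = 0 := by
    rw [Real.volume_preimage_mul_right hJ, hΦ.volume_image_eq_zero hE, mul_zero]
  filter_upwards [measure_eq_zero_iff_ae_notMem.1 hnull] with w hw hwS hwE
  exact hw ⟨X w, hwE, hΦX w hwS⟩

-- Inserting `b` keeps the set nonempty at every level `c`, so the map is monotone on all of `ℝ`.
noncomputable def lowerInverse (Φ : ℝ → ℝ) (a b c : ℝ) : ℝ :=
  sInf (insert b {x | a ≤ x ∧ c ≤ Φ x})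

section LowerInverse

variable {Φ : ℝ → ℝ} {a b : ℝ}

theorem monotone_lowerInverse (hab : a ≤ b) : Monotone (lowerInverse Φ a b) := by
  intro c c' hcc'
  refine csInf_le_csInf ⟨a, ?_⟩ (insert_nonempty _ _) (insert_subset_insert ?_)
  · rintro x (rfl | hx)
    exacts [hab, hx.1]
  · exact fun x hx => ⟨hx.1, hcc'.trans hx.2⟩

theorem apply_lowerInverse (hΦ : Continuous Φ) (hmono : Monotone Φ) (hab : a ≤ b) {c : ℝ}
    (hc : c ∈ Icc (Φ a) (Φ b)) : Φ (lowerInverse Φ a b c) = c := by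
  set T := {x | a ≤ x ∧ c ≤ Φ x}
  have hT : insert b T = T := insert_eq_of_mem ⟨hab, hc.2⟩
  have hbdd : BddBelow T := ⟨a, fun x hx => hx.1⟩
  have hmem : lowerInverse Φ a b c ∈ T := by
    rw [lowerInverse, hT]
    exact (isClosed_Ici.inter (isClosed_le continuous_const hΦ)).csInf_mem ⟨b, hab, hc.2⟩ hbdd
  obtain ⟨y, hy, hyc⟩ := intermediate_value_Icc hab hΦ.continuousOn hc
  have hle : lowerInverse Φ a b c ≤ y := by
    rw [lowerInverse, hT]
    exact csInf_le hbdd ⟨hy.1, hyc.ge⟩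
  exact le_antisymm (hyc ▸ hmono hle :) hmem.2

end LowerInverse

section Primitive

variable {f : ℝ → ℝ}

theorem MeasureTheory.LocallyIntegrable.intervalIntegrable (hf : LocallyIntegrable f) (a b : ℝ) :
    IntervalIntegrable f volume a b :=
  (hf.integrableOn_isCompact isCompact_uIcc).intervalIntegrable

theorem MeasureTheory.LocallyIntegrable.lipschitzWith_primitive (hf : LocallyIntegrable f)
    {M : NNReal} (hM : ∀ x, ‖f x‖ ≤ M) (a : ℝ) : LipschitzWith M fun x => ∫ y in a..x, f y := by
  refine LipschitzWith.of_dist_le_mul fun x y => ?_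
  rw [Real.dist_eq, Real.dist_eq, intervalIntegral.integral_interval_sub_left
    (hf.intervalIntegrable _ _) (hf.intervalIntegrable _ _)]
  exact intervalIntegral.norm_integral_le_of_norm_le_const fun z _ => hM z

theorem MeasureTheory.LocallyIntegrable.monotone_primitive (hf : LocallyIntegrable f)
    (hf0 : ∀ x, 0 ≤ f x) (a : ℝ) : Monotone fun x => ∫ y in a..x, f y := by
  intro x y hxy
  rw [← sub_nonneg]
  dsimp only
  rw [intervalIntegral.integral_interval_sub_left
    (hf.intervalIntegrable _ _) (hf.intervalIntegrable _ _)]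
  exact intervalIntegral.integral_nonneg hxy fun z _ => hf0 z

end Primitive

section Transport

variable {F : ℝ → ℝ≥0∞} {M : NNReal}

theorem locallyIntegrable_toReal_of_le (hF : Measurable F) (hFM : ∀ x, F x ≤ M) :
    LocallyIntegrable fun x => (F x).toReal :=
  (locallyIntegrable_const (M : ℝ)).mono hF.ennreal_toReal.aestronglyMeasurable
    (ae_of_all _ fun x => by simpa using toReal_le_coe_of_le_coe (hFM x))

theorem ofReal_intervalIntegral_toReal_eq_lintegral (hF : Measurable F) (hFM : ∀ x, F x ≤ M)
    {a b : ℝ} (hab : a ≤ b) (hsupp : Function.support F ⊆ Icc a b) :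
    ENNReal.ofReal (∫ y in a..b, (F y).toReal) = ∫⁻ y, F y := by
  have hfin : ∫⁻ y in Ioc a b, F y ≠ ∞ := by
    refine ((setLIntegral_mono measurable_const fun x _ => hFM x).trans_lt ?_).ne
    rw [setLIntegral_const]
    exact mul_lt_top coe_lt_top measure_Ioc_lt_top
  rw [intervalIntegral.integral_of_le hab,
    integral_toReal hF.aemeasurable (ae_of_all _ fun x => (hFM x).trans_lt coe_lt_top),
    ofReal_toReal hfin, setLIntegral_congr Ioc_ae_eq_Icc, setLIntegral_eq_of_support_subset hsupp]

theorem exists_monotone_transport (hF : Measurable F) (hFM : ∀ x, F x ≤ M) {R : ℝ}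
    (hsupp : Function.support F ⊆ Icc (-R) R) (hF0 : ∫⁻ x, F x ≠ 0) :
    ∃ X : ℝ → ℝ, Monotone X ∧
      ∀ᵐ w, w ∈ Ioo 0 1 → F (X w) * ENNReal.ofReal (deriv X w) = ∫⁻ x, F x := by
  have hR : -R ≤ R := by
    by_contra hR
    rw [Icc_eq_empty hR, subset_empty_iff, Function.support_eq_empty_iff] at hsupp
    simp [hsupp] at hF0
  set f := fun x => (F x).toReal
  have hf : LocallyIntegrable f := locallyIntegrable_toReal_of_le hF hFM
  set Φ := fun x => ∫ y in (-R)..x, f y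
  have hΦ : LipschitzWith M Φ :=
    hf.lipschitzWith_primitive (fun x => by simpa [f] using toReal_le_coe_of_le_coe (hFM x)) _
  have hΦmono : Monotone Φ := hf.monotone_primitive (fun _ => toReal_nonneg) _
  set J := Φ R
  have hJ : ENNReal.ofReal J = ∫⁻ x, F x :=
    ofReal_intervalIntegral_toReal_eq_lintegral hF hFM hR hsupp
  have hJ0 : 0 < J := by
    by_contra hJ0
    exact hF0 (hJ ▸ ofReal_eq_zero.2 (not_lt.1 hJ0))
  set X := fun w => lowerInverse Φ (-R) R (w * J)
  have hX : Monotone X := (monotone_lowerInverse hR).comp (monotone_mul_right_of_nonneg hJ0.le)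
  have hΦX : ∀ w ∈ Ioo (0 : ℝ) 1, Φ (X w) = w * J := fun w hw =>
    apply_lowerInverse hΦ.continuous hΦmono hR
      ⟨by simpa [Φ] using mul_nonneg hw.1.le hJ0.le, mul_le_of_le_one_left hJ0.le hw.2.le⟩
  have hXE : ∀ᵐ w, w ∈ Ioo (0 : ℝ) 1 → X w ∉ {x | ¬ HasDerivAt Φ (f x) x} :=
    hΦ.ae_notMem_of_comp_eq_mul_const hJ0.ne' hΦX
      (ae_iff.1 (LocallyIntegrable.ae_hasDerivAt_integral hf |>.mono fun x hx => hx (-R)))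
  refine ⟨X, hX, ?_⟩
  filter_upwards [hX.ae_differentiableAt, hXE] with w hXw hw hw01
  have hΦX' : (fun w => w * J) =ᶠ[𝓝 w] Φ ∘ X :=
    eventually_of_mem (isOpen_Ioo.mem_nhds hw01) fun v hv => (hΦX v hv).symm
  have hderiv : f (X w) * deriv X w = J :=
    (((not_not.1 (hw hw01)).comp w hXw.hasDerivAt).congr_of_eventuallyEq hΦX').unique
      (hasDerivAt_mul_const J)
  rw [← hJ, ← hderiv, ofReal_mul toReal_nonneg,
    ofReal_toReal ((hFM _).trans_lt coe_lt_top).ne]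

end Transport

noncomputable def truncate (F : ℝ → ℝ≥0∞) (K : ℕ) : ℝ → ℝ≥0∞ :=
  (Icc (-(K : ℝ)) K).indicator fun x => min (F x) K

section Truncate

variable {F : ℝ → ℝ≥0∞}

theorem measurable_truncate (hF : Measurable F) (K : ℕ) : Measurable (truncate F K) :=
  (hF.min measurable_const).indicator measurableSet_Icc

theorem truncate_le (K : ℕ) (x : ℝ) : truncate F K x ≤ F x :=
  (indicator_le_self _ _ x).trans (min_le_left _ _)

theorem truncate_le_natCast (K : ℕ) (x : ℝ) : truncate F K x ≤ (K : NNReal) := by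
  rw [ENNReal.coe_natCast]
  exact (indicator_le_self _ _ x).trans (min_le_right _ _)

theorem support_truncate_subset (K : ℕ) : Function.support (truncate F K) ⊆ Icc (-(K : ℝ)) K :=
  support_indicator_subset

theorem monotone_truncate : Monotone (truncate F) := by
  intro K L hKL
  refine indicator_le fun x hx => ?_
  rw [truncate, indicator_of_mem (Icc_subset_Icc (by simpa using hKL) (by simpa using hKL) hx)]
  exact min_le_min_left _ (by exact_mod_cast hKL)

theorem iSup_truncate (x : ℝ) : ⨆ K, truncate F K x = F x := by
  refine le_antisymm (iSup_le fun K => truncate_le K x) ?_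
  obtain ⟨K₀, hK₀⟩ := exists_nat_ge |x|
  calc F x = ⨆ K : ℕ, min (F x) K := by
        rw [← inf_iSup_eq, ENNReal.iSup_natCast, inf_top_eq]
    _ ≤ ⨆ K, truncate F K x := by
        refine iSup_le fun K => le_iSup_of_le (K + K₀) ?_
        have hx : x ∈ Icc (-((K + K₀ : ℕ) : ℝ)) (K + K₀ : ℕ) := by
          rw [mem_Icc, ← abs_le]
          push_cast
          linarith [(K.cast_nonneg : (0 : ℝ) ≤ K)]
        rw [truncate, indicator_of_mem hx]
        exact min_le_min_left _ (by exact_mod_cast K.le_add_right K₀)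

theorem lintegral_eq_iSup_lintegral_truncate (hF : Measurable F) :
    ∫⁻ x, F x = ⨆ K, ∫⁻ x, truncate F K x := by
  rw [← lintegral_iSup (measurable_truncate hF) monotone_truncate]
  simp only [iSup_truncate]

end Truncate

def GenPrekopaLeindler (E : Type*) [AddCommMonoid E] [Module ℝ E] [MeasureSpace E]
    (s t r m : ℝ) : Prop :=
  ∀ F₀ F₁ G₀ G₁ : E → ℝ≥0∞, Measurable F₀ → Measurable F₁ → Measurable G₀ → Measurable G₁ →
    (∀ x₀ x₁ : E, F₀ x₀ ^ (1 - m) * F₁ x₁ ^ m ≤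
      G₀ ((1 - s) • x₀ + s • x₁) ^ (1 - r) * G₁ ((1 - t) • x₀ + t • x₁) ^ r) →
    (∫⁻ x, F₀ x) ^ (1 - m) * (∫⁻ x, F₁ x) ^ m ≤ (∫⁻ x, G₀ x) ^ (1 - r) * (∫⁻ x, G₁ x) ^ r

namespace GenPrekopaLeindler

variable {E E' : Type*} [AddCommMonoid E] [Module ℝ E] [MeasureSpace E]
  [AddCommMonoid E'] [Module ℝ E'] [MeasureSpace E'] {s t r m : ℝ}

theorem of_measurePreserving (h : GenPrekopaLeindler E' s t r m) (φ : E' →ₗ[ℝ] E)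
    (hφ : MeasurePreserving φ) : GenPrekopaLeindler E s t r m := by
  intro F₀ F₁ G₀ G₁ hF₀ hF₁ hG₀ hG₁ hyp
  have hφ' : ∀ F : E → ℝ≥0∞, Measurable F → ∫⁻ y, F (φ y) = ∫⁻ x, F x := fun F hF =>
    hφ.lintegral_comp hF
  rw [← hφ' F₀ hF₀, ← hφ' F₁ hF₁, ← hφ' G₀ hG₀, ← hφ' G₁ hG₁]
  refine h _ _ _ _ (hF₀.comp hφ.measurable) (hF₁.comp hφ.measurable)
    (hG₀.comp hφ.measurable) (hG₁.comp hφ.measurable) fun x₀ x₁ => ?_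
  simpa only [map_add, map_smul] using hyp (φ x₀) (φ x₁)

theorem prod [SFinite (volume : Measure E')] (h : GenPrekopaLeindler E s t r m)
    (h' : GenPrekopaLeindler E' s t r m) : GenPrekopaLeindler (E × E') s t r m := by
  intro F₀ F₁ G₀ G₁ hF₀ hF₁ hG₀ hG₁ hyp
  have hfib : ∀ F : E × E' → ℝ≥0∞, Measurable F → ∫⁻ p, F p = ∫⁻ x, ∫⁻ y, F (x, y) :=
    fun F hF => by rw [Measure.volume_eq_prod, lintegral_prod F hF.aemeasurable]
  rw [hfib F₀ hF₀, hfib F₁ hF₁, hfib G₀ hG₀, hfib G₁ hG₁]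
  refine h _ _ _ _ hF₀.lintegral_prod_right' hF₁.lintegral_prod_right'
    hG₀.lintegral_prod_right' hG₁.lintegral_prod_right' fun x₀ x₁ => ?_
  exact h' _ _ _ _ (hF₀.comp measurable_prodMk_left) (hF₁.comp measurable_prodMk_left)
    (hG₀.comp measurable_prodMk_left) (hG₁.comp measurable_prodMk_left)
    fun y₀ y₁ => hyp (x₀, y₀) (x₁, y₁)

end GenPrekopaLeindler

theorem genPrekopaLeindler_pi_zero (s t r m : ℝ) : GenPrekopaLeindler (Fin 0 → ℝ) s t r m := by
  intro F₀ F₁ G₀ G₁ _ _ _ _ hyp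
  simp only [Measure.volume_pi_eq_dirac 0, lintegral_dirac]
  simpa using hyp 0 0

theorem GenPrekopaLeindler.pi {s t r m : ℝ} (h : GenPrekopaLeindler ℝ s t r m) (n : ℕ) :
    GenPrekopaLeindler (Fin n → ℝ) s t r m := by
  induction n with
  | zero => exact genPrekopaLeindler_pi_zero s t r m
  | succ n ih =>
    let e := MeasurableEquiv.piFinSuccAbove (fun _ : Fin (n + 1) => ℝ) 0
    let φ : (Fin (n + 1) → ℝ) ≃ₗ[ℝ] ℝ × (Fin n → ℝ) :=
      { e.toEquiv with map_add' := fun _ _ => rfl, map_smul' := fun _ _ => rfl }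
    exact (h.prod ih).of_measurePreserving φ.symm.toLinearMap
      (volume_preserving_piFinSuccAbove (fun _ => ℝ) 0).symm


section OneDim

variable {s t r m : ℝ}

theorem lintegral_rpow_mul_rpow_le_of_transport {F₀ F₁ G₀ G₁ : ℝ → ℝ≥0∞} {X₀ X₁ : ℝ → ℝ}
    (hX₀ : Monotone X₀) (hX₁ : Monotone X₁)
    (hT₀ : ∀ᵐ w, w ∈ Ioo 0 1 → F₀ (X₀ w) * ENNReal.ofReal (deriv X₀ w) = ∫⁻ x, F₀ x)
    (hT₁ : ∀ᵐ w, w ∈ Ioo 0 1 → F₁ (X₁ w) * ENNReal.ofReal (deriv X₁ w) = ∫⁻ x, F₁ x)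
    (hG₀ : Measurable G₀) (hG₁ : Measurable G₁)
    (hr0 : 0 ≤ r) (hr1 : r ≤ 1) (hs0 : 0 ≤ s) (hs1 : s ≤ 1) (ht0 : 0 ≤ t) (ht1 : t ≤ 1)
    (hm : m = (1 - r) * s + r * t)
    (hyp : ∀ x₀ x₁ : ℝ, F₀ x₀ ^ (1 - m) * F₁ x₁ ^ m ≤
      G₀ ((1 - s) * x₀ + s * x₁) ^ (1 - r) * G₁ ((1 - t) * x₀ + t * x₁) ^ r) :
    (∫⁻ x, F₀ x) ^ (1 - m) * (∫⁻ x, F₁ x) ^ m ≤ (∫⁻ x, G₀ x) ^ (1 - r) * (∫⁻ x, G₁ x) ^ r := by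
  set u := fun w => (1 - s) * X₀ w + s * X₁ w
  set v := fun w => (1 - t) * X₀ w + t * X₁ w
  have hu : Monotone u := (hX₀.const_mul (by linarith)).add (hX₁.const_mul hs0)
  have hv : Monotone v := (hX₀.const_mul (by linarith)).add (hX₁.const_mul ht0)
  have hpointwise : ∀ᵐ w, w ∈ Ioo 0 1 → (∫⁻ x, F₀ x) ^ (1 - m) * (∫⁻ x, F₁ x) ^ m ≤
      (ENNReal.ofReal (deriv u w) * G₀ (u w)) ^ (1 - r) *
        (ENNReal.ofReal (deriv v w) * G₁ (v w)) ^ r := by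
    filter_upwards [hT₀, hT₁, hX₀.ae_differentiableAt, hX₁.ae_differentiableAt]
      with w h₀ h₁ hd₀ hd₁ hw
    have hdu : deriv u w = (1 - s) * deriv X₀ w + s * deriv X₁ w :=
      ((hd₀.hasDerivAt.const_mul _).add (hd₁.hasDerivAt.const_mul _)).deriv
    have hdv : deriv v w = (1 - t) * deriv X₀ w + t * deriv X₁ w :=
      ((hd₀.hasDerivAt.const_mul _).add (hd₁.hasDerivAt.const_mul _)).deriv
    rw [← h₀ hw, ← h₁ hw, hdu, hdv]
    exact rpow_mul_rpow_le_of_weighted_means hX₀.deriv_nonneg hX₁.deriv_nonneg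
      hr0 hr1 hs0 hs1 ht0 ht1 hm (hyp _ _)
  calc (∫⁻ x, F₀ x) ^ (1 - m) * (∫⁻ x, F₁ x) ^ m
      = ∫⁻ w in Ioo 0 1, (∫⁻ x, F₀ x) ^ (1 - m) * (∫⁻ x, F₁ x) ^ m := by
        simp [Real.volume_Ioo]
    _ ≤ ∫⁻ w in Ioo 0 1, (ENNReal.ofReal (deriv u w) * G₀ (u w)) ^ (1 - r) *
          (ENNReal.ofReal (deriv v w) * G₁ (v w)) ^ r :=
        setLIntegral_mono_ae' measurableSet_Ioo hpointwise
    _ ≤ ∫⁻ w, (ENNReal.ofReal (deriv u w) * G₀ (u w)) ^ (1 - r) *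
          (ENNReal.ofReal (deriv v w) * G₁ (v w)) ^ r := setLIntegral_le_lintegral _ _
    _ ≤ (∫⁻ w, ENNReal.ofReal (deriv u w) * G₀ (u w)) ^ (1 - r) *
          (∫⁻ w, ENNReal.ofReal (deriv v w) * G₁ (v w)) ^ r :=
        ENNReal.lintegral_mul_norm_pow_le
          ((measurable_deriv u).ennreal_ofReal.mul (hG₀.comp hu.measurable)).aemeasurable
          ((measurable_deriv v).ennreal_ofReal.mul (hG₁.comp hv.measurable)).aemeasurable
          (by linarith) hr0 (by ring)
    _ ≤ (∫⁻ x, G₀ x) ^ (1 - r) * (∫⁻ x, G₁ x) ^ r :=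
        mul_le_mul' (rpow_le_rpow (hu.lintegral_ofReal_deriv_mul_comp_le G₀) (by linarith))
          (rpow_le_rpow (hv.lintegral_ofReal_deriv_mul_comp_le G₁) hr0)

theorem lintegral_rpow_mul_rpow_le_of_bounded {F₀ F₁ G₀ G₁ : ℝ → ℝ≥0∞} {M : NNReal} {R : ℝ}
    (hF₀ : Measurable F₀) (hF₁ : Measurable F₁) (hG₀ : Measurable G₀) (hG₁ : Measurable G₁)
    (hF₀M : ∀ x, F₀ x ≤ M) (hF₁M : ∀ x, F₁ x ≤ M)
    (hF₀R : Function.support F₀ ⊆ Icc (-R) R) (hF₁R : Function.support F₁ ⊆ Icc (-R) R)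
    (hr0 : 0 ≤ r) (hr1 : r ≤ 1) (hs0 : 0 ≤ s) (hs1 : s ≤ 1) (ht0 : 0 ≤ t) (ht1 : t ≤ 1)
    (hm : m = (1 - r) * s + r * t) (hm0 : 0 < m) (hm1 : m < 1)
    (hyp : ∀ x₀ x₁ : ℝ, F₀ x₀ ^ (1 - m) * F₁ x₁ ^ m ≤
      G₀ ((1 - s) * x₀ + s * x₁) ^ (1 - r) * G₁ ((1 - t) * x₀ + t * x₁) ^ r) :
    (∫⁻ x, F₀ x) ^ (1 - m) * (∫⁻ x, F₁ x) ^ m ≤ (∫⁻ x, G₀ x) ^ (1 - r) * (∫⁻ x, G₁ x) ^ r := by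
  rcases eq_or_ne (∫⁻ x, F₀ x) 0 with h₀ | h₀
  · simp [h₀, zero_rpow_of_pos (sub_pos.2 hm1)]
  rcases eq_or_ne (∫⁻ x, F₁ x) 0 with h₁ | h₁
  · simp [h₁, zero_rpow_of_pos hm0]
  obtain ⟨X₀, hX₀, hT₀⟩ := exists_monotone_transport hF₀ hF₀M hF₀R h₀
  obtain ⟨X₁, hX₁, hT₁⟩ := exists_monotone_transport hF₁ hF₁M hF₁R h₁
  exact lintegral_rpow_mul_rpow_le_of_transport hX₀ hX₁ hT₀ hT₁ hG₀ hG₁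
    hr0 hr1 hs0 hs1 ht0 ht1 hm hyp

theorem genPrekopaLeindler_real (hr0 : 0 ≤ r) (hr1 : r ≤ 1) (hs0 : 0 ≤ s) (hs1 : s ≤ 1)
    (ht0 : 0 ≤ t) (ht1 : t ≤ 1) (hm : m = (1 - r) * s + r * t) :
    GenPrekopaLeindler ℝ s t r m := by
  intro F₀ F₁ G₀ G₁ hF₀ hF₁ hG₀ hG₁ hyp
  have hdiag : ∀ x, F₀ x ^ (1 - m) * F₁ x ^ m ≤ G₀ x ^ (1 - r) * G₁ x ^ r := fun x => by
    simpa only [← add_smul, sub_add_cancel, one_smul] using hyp x x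
  rcases (show 0 ≤ m from hm ▸ by nlinarith).eq_or_lt with rfl | hm0
  · simpa using lintegral_le_of_le_rpow_mul_rpow hG₀.aemeasurable hG₁.aemeasurable hr0 hr1
      fun x => by simpa using hdiag x
  rcases (show m ≤ 1 from hm ▸ by nlinarith).eq_or_lt with rfl | hm1
  · simpa using lintegral_le_of_le_rpow_mul_rpow hG₀.aemeasurable hG₁.aemeasurable hr0 hr1
      fun x => by simpa using hdiag x
  rw [lintegral_eq_iSup_lintegral_truncate hF₀, lintegral_eq_iSup_lintegral_truncate hF₁]
  refine iSup_rpow_mul_iSup_rpow_le (fun K L hKL => lintegral_mono (monotone_truncate hKL))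
    (fun K L hKL => lintegral_mono (monotone_truncate hKL)) (sub_pos.2 hm1) hm0 fun K => ?_
  exact lintegral_rpow_mul_rpow_le_of_bounded (measurable_truncate hF₀ K)
    (measurable_truncate hF₁ K) hG₀ hG₁ (truncate_le_natCast K) (truncate_le_natCast K)
    (support_truncate_subset K) (support_truncate_subset K) hr0 hr1 hs0 hs1 ht0 ht1 hm hm0 hm1
    fun x₀ x₁ => (mul_le_mul' (rpow_le_rpow (truncate_le K x₀) (sub_pos.2 hm1).le)
      (rpow_le_rpow (truncate_le K x₁) hm0.le)).trans (hyp x₀ x₁)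

end OneDim

theorem prop_M_gen (n : ℕ) (s t r m : ℝ)
    (hs0 : 0 ≤ s) (hs1 : s ≤ 1) (ht0 : 0 ≤ t) (ht1 : t ≤ 1) (hr0 : 0 ≤ r) (hr1 : r ≤ 1)
    (hm : m = (1 - r) * s + r * t)
    (f₀ f₁ g₀ g₁ : EuclideanSpace ℝ (Fin n) → EReal)
    (hf₀ : Measurable f₀) (hf₁ : Measurable f₁) (hg₀ : Measurable g₀) (hg₁ : Measurable g₁)
    (hf₀' : ∀ x, f₀ x ≠ ⊥) (hf₁' : ∀ x, f₁ x ≠ ⊥)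
    (hg₀' : ∀ x, g₀ x ≠ ⊥) (hg₁' : ∀ x, g₁ x ≠ ⊥)
    (h : ∀ x₀ x₁ : EuclideanSpace ℝ (Fin n),
      ((1 - r : ℝ) : EReal) * g₀ ((1 - s) • x₀ + s • x₁)
        + (r : EReal) * g₁ ((1 - t) • x₀ + t • x₁)
        ≤ ((1 - m : ℝ) : EReal) * f₀ x₀ + (m : EReal) * f₁ x₁) :
    (∫⁻ x, expNeg (f₀ x)) ^ (1 - m) * (∫⁻ x, expNeg (f₁ x)) ^ m
      ≤ (∫⁻ x, expNeg (g₀ x)) ^ (1 - r) * (∫⁻ x, expNeg (g₁ x)) ^ r := by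
  have hm0 : 0 ≤ m := hm ▸ by nlinarith
  have hm1 : m ≤ 1 := hm ▸ by nlinarith
  have hPL : GenPrekopaLeindler (EuclideanSpace ℝ (Fin n)) s t r m :=
    ((genPrekopaLeindler_real hr0 hr1 hs0 hs1 ht0 ht1 hm).pi n).of_measurePreserving
      (WithLp.linearEquiv 2 ℝ (Fin n → ℝ)).symm.toLinearMap (PiLp.volume_preserving_toLp (Fin n))
  have hexp : ∀ φ : EuclideanSpace ℝ (Fin n) → EReal, (∀ x, φ x ≠ ⊥) →
      ∫⁻ x, expNeg (φ x) = ∫⁻ x, EReal.exp (-φ x) :=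
    fun φ hφ => lintegral_congr fun x => expNeg_eq_exp_neg (hφ x)
  rw [hexp f₀ hf₀', hexp f₁ hf₁', hexp g₀ hg₀', hexp g₁ hg₁']
  refine hPL _ _ _ _ (EReal.measurable_exp.comp hf₀.neg) (EReal.measurable_exp.comp hf₁.neg)
    (EReal.measurable_exp.comp hg₀.neg) (EReal.measurable_exp.comp hg₁.neg) fun x₀ x₁ => ?_
  exact EReal.exp_neg_rpow_mul_exp_neg_rpow_le (hf₀' _) (hf₁' _) (hg₀' _) (hg₁' _)
    (by linarith) hr0 (by linarith) hm0 (h x₀ x₁)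
end

section
/- Let μ be a finite measure on (Ω, Σ), ν a probability measure on ℝⁿ, and (s,x) ↦ f_s(x) jointly measurable with s ↦ log(∫ e^{−f_s} dν) μ-integrable. For every ε > 0 there exists a continuous function ψ : ℝⁿ → ℝ with 0 ≤ ψ(x) ≤ |x|², ψ(x) → +∞ as |x| → ∞, such that ∫_Ω −log(∫ e^{−f_s(x)−ψ(x)} dν(x)) dμ(s) ≤ ∫_Ω −log(∫ e^{−f_s} dν) dμ(s) + ε. -/
open MeasureTheory ENNReal Filter

noncomputable def erealPos (y : EReal) : ℝ≥0∞ :=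
  if y = ⊤ then ⊤ else ENNReal.ofReal y.toReal

/-- `∫ F dμ = ∫ F⁺ dμ − ∫ F⁻ dμ` for an `EReal`-valued function. -/
noncomputable def eInt {Ω : Type*} [MeasurableSpace Ω] (μ : Measure Ω) (F : Ω → EReal) :
    EReal :=
  ((∫⁻ s, erealPos (F s) ∂μ : ℝ≥0∞) : EReal) - ((∫⁻ s, erealPos (-(F s)) ∂μ : ℝ≥0∞) : EReal)


/-!
Write `L s = ∫ e^{-f_s} dν` and fix a small `c > 0`. By monotone convergence, for a.e. `s` the
integral over some ball already captures `L s` up to the factor `e^c`; so the sets `A_j` of those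
`s` for which the ball of radius `j` fails to do so decrease to a null set, and we can choose
radii `ρ m` with `μ (A_{ρ m}) ≤ 2^{-m}`. Take `ψ = c · stair ρ ‖·‖`, where `stair ρ` rises by
one on each interval `[ρ m, ρ m + 1]`. If `k` is the first index with `s ∉ A_{ρ k}`, then
`ψ ≤ c k` on the ball of radius `ρ k`, whence `-log ∫ e^{-f_s-ψ} dν ≤ -log L s + c (k + 1)`;
and `k` is at most the number of `m` with `s ∈ A_{ρ m}`, whose integral is at most
`∑ 2^{-m} = 2`.
-/

open Set Metric Topology

lemma measurable_expNeg : Measurable expNeg :=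
  Measurable.ite (measurableSet_singleton ⊤) measurable_const
    (ENNReal.measurable_ofReal.comp (Real.measurable_exp.comp measurable_ereal_toReal.neg))

lemma continuous_add_coe_ereal : Continuous fun p : EReal × ℝ => p.1 + (p.2 : EReal) :=
  continuous_iff_continuousAt.2 fun _ =>
    (EReal.continuousAt_add (.inr (EReal.coe_ne_bot _)) (.inr (EReal.coe_ne_top _))).comp
      (continuous_fst.prodMk (continuous_coe_real_ereal.comp continuous_snd)).continuousAt

lemma measurable_expNeg_add_coe : Measurable fun p : EReal × ℝ => expNeg (p.1 + p.2) :=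
  measurable_expNeg.comp continuous_add_coe_ereal.measurable

lemma expNeg_add_coe_le (y : EReal) {a : ℝ} (ha : 0 ≤ a) : expNeg (y + a) ≤ expNeg y := by
  induction y using EReal.rec with
  | bot => simp
  | top => simp
  | coe t =>
    rw [← EReal.coe_add]
    simp only [expNeg, EReal.coe_ne_top, if_false, EReal.toReal_coe]
    gcongr
    linarith

lemma ofReal_exp_neg_mul_expNeg_le (y : EReal) {a : ℝ} (ha : 0 ≤ a) :
    ENNReal.ofReal (Real.exp (-a)) * expNeg y ≤ expNeg (y + a) := by
  induction y using EReal.rec with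
  | bot =>
    simpa [expNeg] using Real.exp_le_one_iff.2 (neg_nonpos.2 ha)
  | top => simp [expNeg]
  | coe t =>
    rw [← EReal.coe_add]
    simp only [expNeg, EReal.coe_ne_top, if_false, EReal.toReal_coe]
    rw [← ENNReal.ofReal_mul (Real.exp_pos _).le, ← Real.exp_add, neg_add, add_comm]

lemma one_lt_ofReal_exp {c : ℝ} (hc : 0 < c) : 1 < ENNReal.ofReal (Real.exp c) := by
  simpa using Real.one_lt_exp_iff.2 hc

noncomputable def stairStep (ρ : ℕ → ℕ) (m : ℕ) (r : ℝ) : ℝ := min 1 (max 0 (r - ρ m))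

noncomputable def stair (ρ : ℕ → ℕ) (r : ℝ) : ℝ := ∑' m, stairStep ρ m r

section Stair

variable {ρ : ℕ → ℕ}

lemma stairStep_nonneg (m : ℕ) (r : ℝ) : 0 ≤ stairStep ρ m r :=
  le_min zero_le_one (le_max_left _ _)

lemma stairStep_le_one (m : ℕ) (r : ℝ) : stairStep ρ m r ≤ 1 := min_le_left _ _

lemma continuous_stairStep (m : ℕ) : Continuous (stairStep ρ m) := by
  unfold stairStep; fun_prop

lemma stairStep_eq_zero {m : ℕ} {r : ℝ} (h : r ≤ ρ m) : stairStep ρ m r = 0 := by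
  rw [stairStep, max_eq_left (by linarith), min_eq_right zero_le_one]

lemma stairStep_eq_one {m : ℕ} {r : ℝ} (h : ρ m + 1 ≤ r) : stairStep ρ m r = 1 := by
  rw [stairStep, max_eq_right (by linarith), min_eq_left (by linarith)]

lemma stair_eq_sum (hρ : Monotone ρ) {r : ℝ} {N : ℕ} (h : r ≤ ρ N) :
    stair ρ r = ∑ m ∈ Finset.range N, stairStep ρ m r :=
  tsum_eq_sum fun m hm =>
    stairStep_eq_zero (h.trans (by exact_mod_cast hρ (not_lt.1 (Finset.mem_range.not.1 hm))))

lemma exists_le_cast_of_strictMono (hρ : StrictMono ρ) (r : ℝ) : ∃ N, r ≤ ρ N :=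
  ⟨⌈r⌉₊, (Nat.le_ceil r).trans (by exact_mod_cast hρ.id_le _)⟩

lemma stair_nonneg (hρ : StrictMono ρ) (r : ℝ) : 0 ≤ stair ρ r := by
  obtain ⟨N, hN⟩ := exists_le_cast_of_strictMono hρ r
  rw [stair_eq_sum hρ.monotone hN]
  exact Finset.sum_nonneg fun m _ => stairStep_nonneg m r

lemma stair_le (hρ : Monotone ρ) {r : ℝ} {N : ℕ} (h : r ≤ ρ N) : stair ρ r ≤ N := by
  rw [stair_eq_sum hρ h]
  simpa using Finset.sum_le_sum fun m (_ : m ∈ Finset.range N) => stairStep_le_one (ρ := ρ) m r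

lemma le_stair (hρ : StrictMono ρ) {r : ℝ} {m : ℕ} (h : ρ m + 1 ≤ r) : (m : ℝ) + 1 ≤ stair ρ r := by
  obtain ⟨N, hN⟩ := exists_le_cast_of_strictMono hρ r
  have hmN : m + 1 ≤ N := hρ.lt_iff_lt.1 (by exact_mod_cast (by linarith : (ρ m : ℝ) < ρ N))
  rw [stair_eq_sum hρ.monotone hN]
  calc (m : ℝ) + 1 = ∑ k ∈ Finset.range (m + 1), stairStep ρ k r := by
        refine (Finset.sum_congr rfl fun k hk => stairStep_eq_one ?_).trans (by simp) |>.symm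
        have : (ρ k : ℝ) ≤ ρ m := by
          exact_mod_cast hρ.monotone (Nat.lt_succ_iff.1 (Finset.mem_range.1 hk))
        linarith
    _ ≤ ∑ k ∈ Finset.range N, stairStep ρ k r :=
        Finset.sum_le_sum_of_subset_of_nonneg (Finset.range_subset_range.2 hmN)
          fun k _ _ => stairStep_nonneg k r

lemma continuous_stair (hρ : StrictMono ρ) : Continuous (stair ρ) := by
  refine continuous_iff_continuousAt.2 fun r => ?_
  obtain ⟨N, hN⟩ := exists_le_cast_of_strictMono hρ (r + 1)
  refine (continuous_finsetSum (Finset.range N) fun m _ =>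
    continuous_stairStep (ρ := ρ) m).continuousAt.congr ?_
  filter_upwards [Iio_mem_nhds (lt_add_one r)] with r' hr'
  exact (stair_eq_sum hρ.monotone (hr'.le.trans hN)).symm

lemma tendsto_stair (hρ : StrictMono ρ) : Tendsto (stair ρ) atTop atTop :=
  tendsto_atTop_atTop.2 fun b => ⟨ρ ⌈b⌉₊ + 1, fun _ hr =>
    (Nat.le_ceil b).trans ((le_add_of_nonneg_right zero_le_one).trans (le_stair hρ hr))⟩

lemma mul_stair_le_sq (hρ : StrictMono ρ) (hρ0 : 0 < ρ 0) {c : ℝ} (hc0 : 0 ≤ c) (hc : c ≤ 1 / 2)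
    {r : ℝ} (hr : 0 ≤ r) : c * stair ρ r ≤ r ^ 2 := by
  rcases le_or_gt r 1 with hr1 | hr1
  · have h0 : stair ρ r ≤ 0 := by
      simpa using stair_le (N := 0) hρ.monotone (hr1.trans (by exact_mod_cast hρ0))
    nlinarith
  · have hceil : stair ρ r ≤ ⌈r⌉₊ :=
      stair_le hρ.monotone ((Nat.le_ceil r).trans (by exact_mod_cast hρ.id_le _))
    have := Nat.ceil_lt_add_one hr
    nlinarith [stair_nonneg hρ r]

end Stair

lemma natCast_le_tsum_indicator_one {Ω : Type*} {A : ℕ → Set Ω} {s : Ω} {k : ℕ}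
    (h : ∀ m < k, s ∈ A m) :
    (k : ℝ≥0∞) ≤ ∑' m, (A m).indicator 1 s :=
  calc (k : ℝ≥0∞) = ∑ m ∈ Finset.range k, (A m).indicator 1 s := by
        rw [Finset.sum_congr rfl fun m hm => Set.indicator_of_mem (h m (Finset.mem_range.1 hm)) _]
        simp
    _ ≤ ∑' m, (A m).indicator 1 s := ENNReal.sum_le_tsum _

section Exhaustion

variable {Ω : Type*} [MeasurableSpace Ω] {μ : Measure Ω}

lemma exists_le_mul_of_iSup_ne_top {g : ℕ → ℝ≥0∞} {c : ℝ≥0∞} (hc : 1 < c)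
    (hg : ⨆ j, g j ≠ ⊤) : ∃ j, ⨆ i, g i ≤ c * g j := by
  by_cases h0 : ⨆ i, g i = 0
  · exact ⟨0, by simp [h0]⟩
  have : ⨆ i, g i < ⨆ j, c * g j := by
    rw [← ENNReal.mul_iSup]
    simpa using ENNReal.mul_lt_mul_left h0 hg hc
  obtain ⟨j, hj⟩ := lt_iSup_iff.1 this
  exact ⟨j, hj.le⟩

lemma tendsto_measure_setOf_mul_lt [IsFiniteMeasure μ] {g : ℕ → Ω → ℝ≥0∞} {G : Ω → ℝ≥0∞}
    (hg : ∀ j, Measurable (g j)) (hmono : ∀ s, Monotone fun j => g j s)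
    (hG : ∀ s, ⨆ j, g j s = G s) (hfin : ∀ᵐ s ∂μ, G s ≠ ⊤) {c : ℝ≥0∞} (hc : 1 < c) :
    Tendsto (fun j => μ {s | c * g j s < G s}) atTop (𝓝 0) := by
  have hGm : Measurable G := funext hG ▸ Measurable.iSup hg
  have hanti : Antitone fun j => {s | c * g j s < G s} := fun i j hij s hs =>
    lt_of_le_of_lt (mul_le_mul_right (hmono s hij) c) hs
  have hnull : μ (⋂ j, {s | c * g j s < G s}) = 0 := by
    refine measure_mono_null (fun s hs => ?_) (ae_iff.1 hfin)
    by_contra hsfin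
    obtain ⟨j, hj⟩ := exists_le_mul_of_iSup_ne_top hc ((hG s).symm ▸ not_not.1 hsfin)
    exact (mem_iInter.1 hs j).not_ge ((hG s) ▸ hj)
  rw [← hnull]
  exact tendsto_measure_iInter_atTop
    (fun j => (measurableSet_lt (measurable_const.mul (hg j)) hGm).nullMeasurableSet)
    hanti ⟨0, measure_ne_top μ _⟩

lemma exists_strictMono_le_inv_two_pow {u : ℕ → ℝ≥0∞} (hu : Tendsto u atTop (𝓝 0)) :
    ∃ ρ : ℕ → ℕ, StrictMono ρ ∧ 0 < ρ 0 ∧ ∀ m, u (ρ m) ≤ 2⁻¹ ^ m := by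
  obtain ⟨ρ, hρ, hρu⟩ := extraction_forall_of_eventually fun m =>
    (eventually_gt_atTop 0).and
      ((ENNReal.tendsto_nhds_zero.1 hu) ((2 : ℝ≥0∞)⁻¹ ^ m) (ENNReal.pow_pos (by simp) m))
  exact ⟨ρ, hρ, (hρu 0).1, fun m => (hρu m).2⟩

lemma lintegral_ofReal_mul_tsum_indicator_add_one_le [IsFiniteMeasure μ] {A : ℕ → Set Ω}
    (hA : ∀ m, MeasurableSet (A m)) (hμA : ∀ m, μ (A m) ≤ 2⁻¹ ^ m) {c ε : ℝ} (hc : 0 ≤ c)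
    (hcε : c * (2 + (μ univ).toReal) ≤ ε) :
    ∫⁻ s, ENNReal.ofReal c * (∑' m, (A m).indicator 1 s + 1) ∂μ ≤ ENNReal.ofReal ε := by
  have hcount : ∫⁻ s, ∑' m, (A m).indicator 1 s ∂μ ≤ 2 := by
    rw [lintegral_tsum (f := fun m => (A m).indicator 1) fun m =>
      (measurable_const.indicator (hA m)).aemeasurable]
    calc ∑' m, ∫⁻ s, (A m).indicator 1 s ∂μ = ∑' m, μ (A m) := by
          simp_rw [lintegral_indicator_one (hA _)]
      _ ≤ ∑' m : ℕ, (2 : ℝ≥0∞)⁻¹ ^ m := ENNReal.tsum_le_tsum hμA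
      _ = 2 := by rw [ENNReal.tsum_geometric, ENNReal.one_sub_inv_two, inv_inv]
  calc _ = ENNReal.ofReal c * (∫⁻ s, ∑' m, (A m).indicator 1 s ∂μ + μ univ) := by
        rw [lintegral_const_mul' _ _ ofReal_ne_top, lintegral_add_right _ measurable_const,
          lintegral_one]
    _ ≤ ENNReal.ofReal c * ENNReal.ofReal (2 + (μ univ).toReal) := by
        rw [ENNReal.ofReal_add zero_le_two ENNReal.toReal_nonneg, ENNReal.ofReal_toReal
          (measure_ne_top _ _), ENNReal.ofReal_ofNat]
        gcongr
    _ ≤ ENNReal.ofReal ε := by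
        rw [← ENNReal.ofReal_mul hc]
        exact ENNReal.ofReal_le_ofReal hcε

end Exhaustion

section eInt

variable {Ω : Type*} [MeasurableSpace Ω] {μ : Measure Ω}

lemma erealPos_coe (t : ℝ) : erealPos t = ENNReal.ofReal t := by
  simp [erealPos]

lemma eInt_eq_integral {F : Ω → EReal} {g : Ω → ℝ} (hg : Integrable g μ)
    (hF : F =ᵐ[μ] fun s => (g s : EReal)) : eInt μ F = ∫ s, g s ∂μ := by
  have hpos : ∫⁻ s, erealPos (F s) ∂μ = ∫⁻ s, ENNReal.ofReal (g s) ∂μ :=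
    lintegral_congr_ae (hF.mono fun s hs => by simp only [hs, erealPos_coe])
  have hneg : ∫⁻ s, erealPos (-F s) ∂μ = ∫⁻ s, ENNReal.ofReal (-g s) ∂μ :=
    lintegral_congr_ae (hF.mono fun s hs => by simp only [hs, ← EReal.coe_neg, erealPos_coe])
  rw [eInt, hpos, hneg, integral_eq_lintegral_pos_part_sub_lintegral_neg_part hg,
    ← EReal.coe_ennreal_toReal hg.lintegral_lt_top.ne,
    ← EReal.coe_ennreal_toReal (x := ∫⁻ s, ENNReal.ofReal (-g s) ∂μ) hg.neg.lintegral_lt_top.ne,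
    EReal.coe_sub]

lemma eInt_le_add_of_ae_eq_add {F G : Ω → EReal} {g D : Ω → ℝ} (hg : Integrable g μ)
    (hD : AEStronglyMeasurable D μ) (hD0 : 0 ≤ᵐ[μ] D) (hF : F =ᵐ[μ] fun s => (g s : EReal))
    (hG : G =ᵐ[μ] fun s => ((g s + D s : ℝ) : EReal)) {ε : ℝ} (hε : 0 ≤ ε)
    (hDε : ∫⁻ s, ENNReal.ofReal (D s) ∂μ ≤ ENNReal.ofReal ε) :
    eInt μ G ≤ eInt μ F + ε := by
  have hDint : Integrable D μ :=
    ⟨hD, (hasFiniteIntegral_iff_ofReal hD0).2 (hDε.trans_lt ofReal_lt_top)⟩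
  have hDle : ∫ s, D s ∂μ ≤ ε := by
    rw [integral_eq_lintegral_of_nonneg_ae hD0 hD]
    exact ENNReal.toReal_le_of_le_ofReal hε hDε
  rw [eInt_eq_integral (g := fun s => g s + D s) (hg.add hDint) hG, eInt_eq_integral hg hF,
    integral_add hg hDint, ← EReal.coe_add, EReal.coe_le_coe_iff]
  linarith

lemma eInt_neg_log_le_add {L L' H : Ω → ℝ≥0∞} (hL' : Measurable L') (hle : ∀ s, L' s ≤ L s)
    (hfin : ∀ᵐ s ∂μ, ENNReal.log (L s) ≠ ⊤ ∧ ENNReal.log (L s) ≠ ⊥)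
    (hint : Integrable (fun s => (ENNReal.log (L s)).toReal) μ)
    (hH : ∀ᵐ s ∂μ, ∃ k : ℝ, L s ≤ ENNReal.ofReal (Real.exp k) * L' s ∧ ENNReal.ofReal k ≤ H s)
    {ε : ℝ} (hε : 0 ≤ ε) (hHε : ∫⁻ s, H s ∂μ ≤ ENNReal.ofReal ε) :
    eInt μ (fun s => -ENNReal.log (L' s)) ≤ eInt μ (fun s => -ENNReal.log (L s)) + ε := by
  set ℓ := fun s => (ENNReal.log (L s)).toReal
  set ℓ' := fun s => (ENNReal.log (L' s)).toReal
  have key : ∀ᵐ s ∂μ, ENNReal.log (L s) = ℓ s ∧ ENNReal.log (L' s) = ℓ' s ∧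
      0 ≤ ℓ s - ℓ' s ∧ ENNReal.ofReal (ℓ s - ℓ' s) ≤ H s := by
    filter_upwards [hfin, hH] with s ⟨htop, hbot⟩ ⟨k, hk, hkH⟩
    have hlow : ENNReal.log (L' s) ≤ ENNReal.log (L s) := ENNReal.log_monotone (hle s)
    have hup : ENNReal.log (L s) ≤ k + ENNReal.log (L' s) := by
      simpa [ENNReal.log_mul_add, ENNReal.log_ofReal_of_pos (Real.exp_pos k)] using
        ENNReal.log_monotone hk
    have htop' : ENNReal.log (L' s) ≠ ⊤ := ne_top_of_le_ne_top htop hlow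
    have hbot' : ENNReal.log (L' s) ≠ ⊥ := fun h => hbot (by simpa [h] using hup)
    rw [← EReal.coe_toReal htop hbot, ← EReal.coe_toReal htop' hbot'] at hlow hup
    rw [← EReal.coe_add, EReal.coe_le_coe_iff] at hup
    refine ⟨(EReal.coe_toReal htop hbot).symm, (EReal.coe_toReal htop' hbot').symm,
      sub_nonneg.2 (EReal.coe_le_coe_iff.1 hlow), ?_⟩
    exact (ENNReal.ofReal_le_ofReal (by linarith)).trans hkH
  refine eInt_le_add_of_ae_eq_add (g := fun s => -ℓ s) (D := fun s => ℓ s - ℓ' s) hint.neg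
    (hint.aestronglyMeasurable.sub hL'.ennreal_log.ereal_toReal.aestronglyMeasurable)
    (key.mono fun s hs => hs.2.2.1) (key.mono fun s hs => by simp only [hs.1, EReal.coe_neg])
    (key.mono fun s hs => by
      rw [hs.2.1, ← EReal.coe_neg]; congr 1; ring) hε ?_
  exact (lintegral_mono_ae (key.mono fun s hs => hs.2.2.2)).trans hHε

end eInt

lemma iSup_setLIntegral_closedBall {E : Type*} [PseudoMetricSpace E] [MeasurableSpace E]
    (ν : Measure E) (e : E → ℝ≥0∞) (x₀ : E) :
    ⨆ j : ℕ, ∫⁻ x in closedBall x₀ j, e x ∂ν = ∫⁻ x, e x ∂ν := by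
  rw [← setLIntegral_iUnion_of_directed _ (Monotone.directed_le fun i j hij =>
    closedBall_subset_closedBall (by exact_mod_cast hij)), iUnion_closedBall_nat, setLIntegral_univ]

lemma lintegral_expNeg_le_mul_lintegral_expNeg_add {E : Type*} [MeasurableSpace E]
    {ν : Measure E} {g : E → EReal} {ψ : E → ℝ} {S : Set E}
    (hS : MeasurableSet S) {a t : ℝ} (hψ0 : ∀ x ∈ S, 0 ≤ ψ x) (hψa : ∀ x ∈ S, ψ x ≤ a)
    (h : ∫⁻ x, expNeg (g x) ∂ν ≤ ENNReal.ofReal (Real.exp t) * ∫⁻ x in S, expNeg (g x) ∂ν) :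
    ∫⁻ x, expNeg (g x) ∂ν ≤ ENNReal.ofReal (Real.exp (t + a)) * ∫⁻ x, expNeg (g x + ψ x) ∂ν := by
  have hS' : ENNReal.ofReal (Real.exp (-a)) * ∫⁻ x in S, expNeg (g x) ∂ν ≤
      ∫⁻ x, expNeg (g x + ψ x) ∂ν :=
    calc _ = ∫⁻ x in S, ENNReal.ofReal (Real.exp (-a)) * expNeg (g x) ∂ν :=
          (lintegral_const_mul' _ _ ofReal_ne_top).symm
      _ ≤ ∫⁻ x in S, expNeg (g x + ψ x) ∂ν := setLIntegral_mono' hS fun x hx =>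
          (mul_le_mul_left (ENNReal.ofReal_le_ofReal (Real.exp_le_exp.2 (neg_le_neg (hψa x hx))))
            _).trans (ofReal_exp_neg_mul_expNeg_le _ (hψ0 x hx))
      _ ≤ _ := setLIntegral_le_lintegral _ _
  calc _ ≤ ENNReal.ofReal (Real.exp t) * ∫⁻ x in S, expNeg (g x) ∂ν := h
    _ = ENNReal.ofReal (Real.exp (t + a)) *
          (ENNReal.ofReal (Real.exp (-a)) * ∫⁻ x in S, expNeg (g x) ∂ν) := by
        rw [← mul_assoc, ← ENNReal.ofReal_mul (Real.exp_pos _).le, ← Real.exp_add,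
          add_neg_cancel_right]
    _ ≤ _ := by gcongr

section Penalty

variable {E : Type*} [NormedAddCommGroup E] [MeasurableSpace E] {ν : Measure E}

lemma tendsto_measure_setOf_mul_lt_setLIntegral_closedBall {Ω : Type*} [MeasurableSpace Ω]
    {μ : Measure Ω} [IsFiniteMeasure μ] [SFinite ν] {e : Ω → E → ℝ≥0∞}
    (he : Measurable (Function.uncurry e)) (hfin : ∀ᵐ s ∂μ, ∫⁻ x, e s x ∂ν ≠ ⊤)
    {C : ℝ≥0∞} (hC : 1 < C) :
    Tendsto (fun j : ℕ => μ {s | C * ∫⁻ x in closedBall 0 j, e s x ∂ν < ∫⁻ x, e s x ∂ν})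
      atTop (𝓝 0) :=
  tendsto_measure_setOf_mul_lt (fun _ => he.lintegral_prod_right')
    (fun _ _ _ hij => lintegral_mono_set (closedBall_subset_closedBall (by exact_mod_cast hij)))
    (fun s => iSup_setLIntegral_closedBall ν (e s) 0) hfin hC

lemma exists_lintegral_expNeg_le_mul_lintegral_expNeg_add_stair [OpensMeasurableSpace E]
    {ρ : ℕ → ℕ} (hρ : StrictMono ρ) {c : ℝ} (hc : 0 < c) {g : E → EReal}
    (hg : ∫⁻ x, expNeg (g x) ∂ν ≠ ⊤) :
    ∃ k : ℕ, (∀ m < k, ENNReal.ofReal (Real.exp c) * ∫⁻ x in closedBall 0 (ρ m), expNeg (g x) ∂ν <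
        ∫⁻ x, expNeg (g x) ∂ν) ∧
      ∫⁻ x, expNeg (g x) ∂ν ≤
        ENNReal.ofReal (Real.exp (c * (k + 1))) *
          ∫⁻ x, expNeg (g x + (c * stair ρ ‖x‖ : ℝ)) ∂ν := by
  classical
  have hex : ∃ m, ∫⁻ x, expNeg (g x) ∂ν ≤
      ENNReal.ofReal (Real.exp c) * ∫⁻ x in closedBall 0 (ρ m), expNeg (g x) ∂ν := by
    rw [← iSup_setLIntegral_closedBall ν _ 0] at hg ⊢
    obtain ⟨j, hj⟩ := exists_le_mul_of_iSup_ne_top (one_lt_ofReal_exp hc) hg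
    refine ⟨j, hj.trans ?_⟩
    gcongr
    exact hρ.id_le j
  refine ⟨Nat.find hex, fun m hm => not_le.1 (Nat.find_min hex hm), ?_⟩
  convert lintegral_expNeg_le_mul_lintegral_expNeg_add (g := g) (ψ := fun x => c * stair ρ ‖x‖)
    (a := c * Nat.find hex)
    measurableSet_closedBall (fun x _ => mul_nonneg hc.le (stair_nonneg hρ _))
    (fun x hx => mul_le_mul_of_nonneg_left (stair_le hρ.monotone (mem_closedBall_zero_iff.1 hx))
      hc.le) (Nat.find_spec hex) using 4
  ring

end Penalty

/-- Adding a coercive penalty `ψ` with `0 ≤ ψ(x) ≤ |x|²` changes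
`∫ −log(∫ e^{−f_s} dν) dμ(s)` by at most `ε`. -/
theorem adding_psi {Ω : Type*} [MeasurableSpace Ω] (μ : Measure Ω) [IsFiniteMeasure μ]
    (n : ℕ) (ν : Measure (EuclideanSpace ℝ (Fin n))) [IsProbabilityMeasure ν]
    (f : Ω → EuclideanSpace ℝ (Fin n) → EReal)
    (hf : Measurable (Function.uncurry f))
    (hfin : ∀ᵐ s ∂μ, ENNReal.log (∫⁻ x, expNeg (f s x) ∂ν) ≠ ⊤ ∧
      ENNReal.log (∫⁻ x, expNeg (f s x) ∂ν) ≠ ⊥)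
    (hint : Integrable (fun s => (ENNReal.log (∫⁻ x, expNeg (f s x) ∂ν)).toReal) μ)
    (ε : ℝ) (hε : 0 < ε) :
    ∃ ψ : EuclideanSpace ℝ (Fin n) → ℝ, Continuous ψ ∧
      (∀ x, 0 ≤ ψ x) ∧ (∀ x, ψ x ≤ ‖x‖ ^ 2) ∧
      Tendsto ψ (cocompact (EuclideanSpace ℝ (Fin n))) atTop ∧
      eInt μ (fun s => -(ENNReal.log (∫⁻ x, expNeg (f s x + (ψ x : ℝ)) ∂ν)))
        ≤ eInt μ (fun s => -(ENNReal.log (∫⁻ x, expNeg (f s x) ∂ν))) + (ε : EReal) := by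
  have he : Measurable fun p : Ω × _ => expNeg (f p.1 p.2) := measurable_expNeg.comp hf
  have hLfin : ∀ᵐ s ∂μ, ∫⁻ x, expNeg (f s x) ∂ν ≠ ⊤ :=
    hfin.mono fun s hs => ENNReal.log_eq_top_iff.not.1 hs.1
  set c := min (1 / 2) (ε / (2 + (μ univ).toReal))
  have hc : 0 < c := lt_min one_half_pos (div_pos hε (by positivity))
  have hcε : c * (2 + (μ univ).toReal) ≤ ε := (le_div_iff₀ (by positivity)).1 (min_le_right _ _)
  obtain ⟨ρ, hρ, hρ0, hA⟩ := exists_strictMono_le_inv_two_pow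
    (tendsto_measure_setOf_mul_lt_setLIntegral_closedBall he hLfin (one_lt_ofReal_exp hc))
  set ψ := fun x : EuclideanSpace ℝ (Fin n) => c * stair ρ ‖x‖
  have hψ0 : ∀ x, 0 ≤ ψ x := fun x => mul_nonneg hc.le (stair_nonneg hρ _)
  have hψ : Continuous ψ := continuous_const.mul ((continuous_stair hρ).comp continuous_norm)
  refine ⟨ψ, hψ, hψ0, fun x => mul_stair_le_sq hρ hρ0 hc.le (min_le_left _ _) (norm_nonneg x),
    ((tendsto_stair hρ).comp tendsto_norm_cocompact_atTop).const_mul_atTop hc,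
    eInt_neg_log_le_add (measurable_expNeg_add_coe.comp
      (hf.prodMk (hψ.measurable.comp measurable_snd))).lintegral_prod_right'
      (fun s => lintegral_mono fun x => expNeg_add_coe_le _ (hψ0 x)) hfin hint ?_ hε.le
      (lintegral_ofReal_mul_tsum_indicator_add_one_le (fun m => measurableSet_lt
        (measurable_const.mul he.lintegral_prod_right') he.lintegral_prod_right') hA hc.le hcε)⟩
  filter_upwards [hLfin] with s hs
  obtain ⟨k, hbad, hk⟩ := exists_lintegral_expNeg_le_mul_lintegral_expNeg_add_stair hρ hc hs
  refine ⟨c * (k + 1), hk, ?_⟩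
  rw [ENNReal.ofReal_mul hc.le, ENNReal.ofReal_add (Nat.cast_nonneg _) zero_le_one,
    ENNReal.ofReal_natCast, ENNReal.ofReal_one]
  gcongr
  exact natCast_le_tsum_indicator_one hbad
end
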